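/- Typability from MB to 4D': if Γ ⊢_MB e : τ₁ [τ₂ σ₂] τ₃ σ₃ in the (extended) monomorphic Materzok–Biernacki type system for shift0/reset0, and ⌊τ₁⌋ = τ, ⌊[τ₂ σ₂]⌋ = (σ_α, α), ⌊[τ₃ σ₃]⌋ = (σ_β, β), then ⌊Γ⌋ ⊢_4D' e : τ ⟨σ_α⟩ α ⟨σ_β⟩ β. -/
import Mathlib


namespace MB4D

/- MB types and annotations for λ_{S₀} (extended monomorphic
   Materzok–Biernacki system: arrow types carry a non-empty annotation
   [t1 s1] t2 s2 for the function body). -/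
mutual
inductive MTy : Type
  | nat : MTy
  | arr : MTy → MTy → MTy → MAnn → MTy → MAnn → MTy
inductive MAnn : Type
  | eps : MAnn
  | ann : MTy → MAnn → MTy → MAnn → MAnn
end

/- 4D' types: the trail-free 4D type system for shift0/reset0, with
   defunctionalized (pair-list) meta-continuation types
   σ ::= •σ | (τ1 ⟨σ1⟩ τ2) :: σ. -/
mutual
inductive PTy : Type
  | nat : PTy
  | arr : PTy → PTy → PM → PTy → PM → PTy → PTy
inductive PM : Type
  | empty : PM
  | cons : PTy → PM → PTy → PM → PM
end

/- The translation ⌊·⌋ from MB types and annotations to 4D' types and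
   (meta-continuation type, answer type) pairs. -/
mutual
def toP : MTy → PTy
  | .nat => .nat
  | .arr a b t1 s1 t2 s2 =>
      .arr (toP a) (toP b) (toPM t1 s1) (toPA t1 s1) (toPM t2 s2) (toPA t2 s2)
  termination_by τ => sizeOf τ
  decreasing_by all_goals (simp_wf <;> omega)
def toPM : MTy → MAnn → PM
  | _, .eps => .empty
  | τ, .ann ta sa tb sb => .cons (toP τ) (toPM ta sa) (toPA ta sa) (toPM tb sb)
  termination_by τ σ => sizeOf τ + sizeOf σ
  decreasing_by all_goals (simp_wf <;> omega)
def toPA : MTy → MAnn → PTy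
  | τ, .eps => toP τ
  | _, .ann _ _ tb sb => toPA tb sb
  termination_by τ σ => sizeOf τ + sizeOf σ
  decreasing_by all_goals (simp_wf <;> omega)
end

/- The inverse translation ⌈·⌉ from 4D' types and (meta-continuation type,
   answer type) pairs back to MB types and annotations. -/
mutual
def fromP : PTy → MTy
  | .nat => .nat
  | .arr a b m1 a1 m2 a2 =>
      .arr (fromP a) (fromP b) (fromPT m1 a1) (fromPA m1 a1) (fromPT m2 a2) (fromPA m2 a2)
  termination_by τ => sizeOf τ
  decreasing_by all_goals (simp_wf <;> omega)
def fromPT : PM → PTy → MTy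
  | .empty, α => fromP α
  | .cons t1 _ _ _, _ => fromP t1
  termination_by σ α => sizeOf σ + sizeOf α
  decreasing_by all_goals (simp_wf <;> omega)
def fromPA : PM → PTy → MAnn
  | .empty, _ => .eps
  | .cons _ σ1 t2 rest, α => .ann (fromPT σ1 t2) (fromPA σ1 t2) (fromPT rest α) (fromPA rest α)
  termination_by σ α => sizeOf σ + sizeOf α
  decreasing_by all_goals (simp_wf <;> omega)
end

/-- The trail-free id-cont-type constraint of 4D'. -/
inductive IdContP : PTy → PM → PTy → Prop
  | idEmpty (γ : PTy) : IdContP γ .empty γ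
  | idMeta (γ : PTy) (σ0 : PM) (γ' : PTy) : IdContP γ (.cons γ σ0 γ' σ0) γ'

/- Source language: λ-calculus with numbers and shift0/reset0. -/
inductive Tm : Type
  | var : ℕ → Tm
  | num : ℕ → Tm
  | lam : Tm → Tm
  | app : Tm → Tm → Tm
  | shift0 : Tm → Tm
  | reset0 : Tm → Tm

/-- The extended monomorphic Materzok–Biernacki type system for λ_{S₀}:
    `MHasTy Γ e τ σ` is the judgment Γ ⊢ e : τ σ; the judgment
    Γ ⊢ e : τ₁ [τ₂ σ₂] τ₃ σ₃ is `MHasTy Γ e τ₁ (.ann τ₂ σ₂ τ₃ σ₃)`. -/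
inductive MHasTy : List MTy → Tm → MTy → MAnn → Prop
  | var {Γ : List MTy} {x : ℕ} {τ τ' : MTy} {σ' : MAnn} :
      Γ[x]? = some τ → MHasTy Γ (.var x) τ (.ann τ' σ' τ' σ')
  | num {Γ : List MTy} {n : ℕ} {τ' : MTy} {σ' : MAnn} :
      MHasTy Γ (.num n) .nat (.ann τ' σ' τ' σ')
  | lam {Γ : List MTy} {e : Tm} {a b t1 : MTy} {s1 : MAnn} {t2 : MTy} {s2 : MAnn} {τ' : MTy}
      {σ' : MAnn} :
      MHasTy (a :: Γ) e b (.ann t1 s1 t2 s2) →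
      MHasTy Γ (.lam e) (.arr a b t1 s1 t2 s2) (.ann τ' σ' τ' σ')
  | app {Γ : List MTy} {e1 e2 : Tm} {a b t1 : MTy} {s1 : MAnn} {t2 : MTy} {s2 : MAnn}
      {tc : MTy} {sc : MAnn} {td : MTy} {sd : MAnn} :
      MHasTy Γ e1 (.arr a b t1 s1 t2 s2) (.ann tc sc td sd) →
      MHasTy Γ e2 a (.ann t2 s2 tc sc) →
      MHasTy Γ (.app e1 e2) b (.ann t1 s1 td sd)
  | shift0 {Γ : List MTy} {e : Tm} {τ τ1 ta : MTy} {sa : MAnn} {tb : MTy} {sb : MAnn}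
      {τ2 tc : MTy} {sc : MAnn} {td : MTy} {sd : MAnn} :
      MHasTy ((.arr τ τ1 ta sa tb sb) :: Γ) e τ2 (.ann tc sc td sd) →
      MHasTy Γ (.shift0 e) τ (.ann τ1 (.ann ta sa tb sb) τ2 (.ann tc sc td sd))
  | reset0 {Γ : List MTy} {e : Tm} {τ τ2 ta : MTy} {sa : MAnn} {tb : MTy} {sb : MAnn} :
      MHasTy Γ e τ (.ann τ .eps τ2 (.ann ta sa tb sb)) →
      MHasTy Γ (.reset0 e) τ2 (.ann ta sa tb sb)

/-- The 4D' type system (the 4D type system for shift0/reset0, without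
    trails): Γ ⊢ e : τ ⟨σα⟩ α ⟨σβ⟩ β. -/
inductive PHasTy : List PTy → Tm → PTy → PM → PTy → PM → PTy → Prop
  | var {Γ : List PTy} {x : ℕ} {τ : PTy} {σ : PM} {α : PTy} :
      Γ[x]? = some τ → PHasTy Γ (.var x) τ σ α σ α
  | num {Γ : List PTy} {n : ℕ} {σ : PM} {α : PTy} : PHasTy Γ (.num n) .nat σ α σ α
  | lam {Γ : List PTy} {e : Tm} {τ1 τ2 : PTy} {σα : PM} {a : PTy} {σβ : PM} {b : PTy}
      {σ : PM} {γ : PTy} :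
      PHasTy (τ1 :: Γ) e τ2 σα a σβ b →
      PHasTy Γ (.lam e) (.arr τ1 τ2 σα a σβ b) σ γ σ γ
  | app {Γ : List PTy} {e1 e2 : Tm} {τ1 τ2 : PTy} {σα : PM} {a : PTy} {σβ : PM} {b : PTy}
      {σγ : PM} {γ : PTy} {σδ : PM} {δ : PTy} :
      PHasTy Γ e1 (.arr τ1 τ2 σα a σβ b) σγ γ σδ δ →
      PHasTy Γ e2 τ1 σβ b σγ γ →
      PHasTy Γ (.app e1 e2) τ2 σα a σδ δ
  | shift0 {Γ : List PTy} {e : Tm} {τ τ1 : PTy} {σ1 : PM} {τ2 : PTy} {σ' : PM} {α τ0 : PTy}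
      {σ0 : PM} {τ0' : PTy} {σ0' : PM} {β : PTy} :
      PHasTy ((.arr τ τ1 σ1 τ2 σ' α) :: Γ) e τ0 σ0 τ0' σ0' β →
      PHasTy Γ (.shift0 e) τ (.cons τ1 σ1 τ2 σ') α (.cons τ0 σ0 τ0' σ0') β
  | reset0 {Γ : List PTy} {e : Tm} {γ : PTy} {σid : PM} {γ' τ : PTy} {σα : PM} {α : PTy}
      {σβ : PM} {β : PTy} :
      IdContP γ σid γ' →
      PHasTy Γ e γ σid γ' (.cons τ σα α σβ) β →
      PHasTy Γ (.reset0 e) τ σα α σβ β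

theorem mb_to_4dp_aux {Γ : List MTy} {e : Tm} {τ1 : MTy} {σ : MAnn}
    (h : MHasTy Γ e τ1 σ) :
    ∀ τ2 σ2 τ3 σ3, σ = .ann τ2 σ2 τ3 σ3 →
      PHasTy (Γ.map toP) e (toP τ1) (toPM τ2 σ2) (toPA τ2 σ2) (toPM τ3 σ3) (toPA τ3 σ3) := by
  induction h with
  | var hx =>
    rintro t2 s2 t3 s3 ⟨rfl, rfl, rfl, rfl⟩
    exact PHasTy.var (by simp [hx])
  | num =>
    rintro t2 s2 t3 s3 ⟨rfl, rfl, rfl, rfl⟩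
    rw [toP]; exact PHasTy.num
  | lam _ ih =>
    rintro t2 s2 t3 s3 ⟨rfl, rfl, rfl, rfl⟩
    rw [toP]; exact PHasTy.lam (by simpa [toP] using ih _ _ _ _ rfl)
  | app _ _ ih1 ih2 =>
    rintro t2 s2 t3 s3 ⟨rfl, rfl, rfl, rfl⟩
    have h1 := ih1 _ _ _ _ rfl
    rw [toP] at h1
    exact PHasTy.app h1 (ih2 _ _ _ _ rfl)
  | shift0 _ ih =>
    rintro t2 s2 t3 s3 ⟨rfl, rfl, rfl, rfl⟩
    have h1 := ih _ _ _ _ rfl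
    rw [toPM, toPA, toPM, toPA]
    exact PHasTy.shift0 (by simpa [toP] using h1)
  | reset0 _ ih =>
    rintro t2 s2 t3 s3 ⟨rfl, rfl, rfl, rfl⟩
    have h1 := ih _ _ _ _ rfl
    rw [toPM, toPA, toPM, toPA] at h1
    exact PHasTy.reset0 (IdContP.idEmpty _) h1

/-- Typability from MB to 4D': if Γ ⊢_MB e : τ₁ [τ₂ σ₂] τ₃ σ₃ in the extended
    monomorphic Materzok–Biernacki system, and ⌊τ₁⌋ = τ, ⌊[τ₂ σ₂]⌋ = (σα, α),
    ⌊[τ₃ σ₃]⌋ = (σβ, β), then ⌊Γ⌋ ⊢_4D' e : τ ⟨σα⟩ α ⟨σβ⟩ β. -/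
theorem mb_to_4dp {Γ : List MTy} {e : Tm} {τ1 τ2 : MTy} {σ2 : MAnn} {τ3 : MTy} {σ3 : MAnn}
    {τ : PTy} {σα : PM} {α : PTy} {σβ : PM} {β : PTy}
    (h : MHasTy Γ e τ1 (.ann τ2 σ2 τ3 σ3))
    (h1 : toP τ1 = τ)
    (h2 : toPM τ2 σ2 = σα) (h3 : toPA τ2 σ2 = α)
    (h4 : toPM τ3 σ3 = σβ) (h5 : toPA τ3 σ3 = β) :
    PHasTy (Γ.map toP) e τ σα α σβ β := by
  subst h1 h2 h3 h4 h5
  exact mb_to_4dp_aux h _ _ _ _ rfl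

end MB4D
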